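/- Let p be a prime and f : R → A a flat homomorphism of F_p-algebras such that the relative Frobenius F_{A/R} is an isomorphism. Then A is formally étale over R: for every R-algebra C with ideal b ⊆ C satisfying b² = 0 and every R-algebra map A → C/b, there exists a unique R-algebra lift A → C. -/

import Mathlib

open TensorProduct

/-- `FStar p R` is `R` viewed as an `R`-algebra via the Frobenius `r ↦ r ^ p`. -/
def FStar (_p : ℕ) (R : Type*) : Type _ := R

instance (p : ℕ) (R : Type*) [CommRing R] : CommRing (FStar p R) :=
  inferInstanceAs (CommRing R)

noncomputable instance (p : ℕ) (R A : Type*) [CommRing R] [CommRing A] [Algebra R A]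
    [ExpChar A p] : Algebra R (FStar p A) :=
  ((frobenius A p).comp (algebraMap R A)).toAlgebra

/-- Frobenius of `A`, as a map `A →ₐ[R] FStar p A`. -/
noncomputable def frobAlgHom (p : ℕ) (R A : Type*) [CommRing R] [CommRing A] [Algebra R A]
    [ExpChar A p] : A →ₐ[R] FStar p A :=
  { frobenius A p with commutes' := fun _ => rfl }

/-- The structure map `F_*R → F_*A`, as a map of `R`-algebras. -/
noncomputable def fstarAlgHom (p : ℕ) (R A : Type*) [CommRing R] [CommRing A] [Algebra R A]
    [ExpChar R p] [ExpChar A p] : FStar p R →ₐ[R] FStar p A :=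
  { (algebraMap R A : R →+* A) with
    commutes' := fun r => by
      show (algebraMap R A) (frobenius R p (algebraMap R R r)) = frobenius A p (algebraMap R A r)
      simp [frobenius_def, map_pow] }

/-- The relative Frobenius `A ⊗[R] F_*R → F_*A`, `a ⊗ r ↦ a^p · r`. -/
noncomputable def relFrob (p : ℕ) (R A : Type*) [CommRing R] [CommRing A] [Algebra R A]
    [ExpChar R p] [ExpChar A p] : (A ⊗[R] FStar p R) →ₐ[R] FStar p A :=
  Algebra.TensorProduct.productMap (frobAlgHom p R A) (fstarAlgHom p R A)

/-!
For `b` in a square-zero ideal `I ⊆ B` we have `b ^ p = 0`, so the Frobenius of `B` factors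
through `B ⧸ I`. Hence two lifts `g₁, g₂ : A → B` of the same map agree on `p`-th powers, and,
being `R`-linear, on the image of the relative Frobenius, which is all of `A`.

Conversely, for `φ : A → B ⧸ I`, the factored Frobenius turns `φ` into an `R`-algebra map
`ψ : A → F_*B`, and `ψ ⊗ (F_*R → F_*B)` composed with the inverse of the relative Frobenius is a map
`g : A → B` with `g (a ^ p) = ψ a`. Reducing modulo `I`, `g` and `φ` agree on `p`-th powers, so `g`
lifts `φ` by the uniqueness argument applied to `B ⧸ I`.
-/

variable {p : ℕ} {R A : Type*} [CommRing R] [CommRing A] [Algebra R A]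

theorem charP_of_nontrivial_algebra [Fact p.Prime] [CharP R p] (B : Type*) [CommRing B]
    [Algebra R B] [Nontrivial B] : CharP B p :=
  (CharP.charP_iff_prime_eq_zero Fact.out).mpr <| by
    rw [← map_natCast (algebraMap R B), CharP.cast_eq_zero, map_zero]

section SquareZero

variable [Fact p.Prime] {B : Type*} [CommRing B] [ExpChar B p] {I : Ideal B}

theorem frobenius_eq_zero_of_mem_of_sq_eq_bot (hI : I ^ 2 = ⊥) {b : B} (hb : b ∈ I) :
    frobenius B p b = 0 := by
  have hb2 : b ^ 2 = 0 := by simpa [hI] using Ideal.pow_mem_pow hb 2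
  exact pow_eq_zero_of_le (Fact.out : p.Prime).two_le hb2

variable (p R) in
noncomputable def quotientFrobenius [Algebra R B] (hI : I ^ 2 = ⊥) : B ⧸ I →ₐ[R] FStar p B :=
  Ideal.Quotient.liftₐ I (frobAlgHom p R B) fun _ ↦ frobenius_eq_zero_of_mem_of_sq_eq_bot hI

@[simp]
theorem quotientFrobenius_mk [Algebra R B] (hI : I ^ 2 = ⊥) (b : B) :
    quotientFrobenius p R hI (Ideal.Quotient.mk I b) = (b ^ p : B) :=
  frobenius_def p b

theorem mk_quotientFrobenius [Algebra R B] (hI : I ^ 2 = ⊥) (x : B ⧸ I) :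
    Ideal.Quotient.mk I (quotientFrobenius p R hI x) = x ^ p := by
  obtain ⟨b, rfl⟩ := Ideal.Quotient.mk_surjective x
  rw [quotientFrobenius_mk, map_pow]

end SquareZero

section RelFrob

variable [ExpChar R p] [ExpChar A p]

theorem relFrob_tmul (a : A) (r : FStar p R) :
    relFrob p R A (a ⊗ₜ[R] r) = (a ^ p * algebraMap R A r : A) :=
  rfl

theorem relFrob_tmul_one (a : A) : relFrob p R A (a ⊗ₜ[R] 1) = (a ^ p : A) :=
  Algebra.TensorProduct.productMap_left_apply _ _ _

theorem relFrob_one_tmul (r : R) : relFrob p R A (1 ⊗ₜ[R] r) = algebraMap R A r :=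
  Algebra.TensorProduct.productMap_right_apply _ _ _

theorem AlgHom.ext_of_relFrob_surjective (hsurj : Function.Surjective (relFrob p R A))
    {C : Type*} [CommRing C] [Algebra R C] {g₁ g₂ : A →ₐ[R] C}
    (h : ∀ a, g₁ (a ^ p) = g₂ (a ^ p)) : g₁ = g₂ := by
  ext a
  obtain ⟨x, rfl⟩ := hsurj a
  induction x using TensorProduct.induction_on with
  | zero => exact (map_zero g₁).trans (map_zero g₂).symm
  | tmul a r =>
    rw [relFrob_tmul, map_mul, map_mul, h]
    exact congrArg _ ((g₁.commutes r).trans (g₂.commutes r).symm)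
  | add x y hx hy =>
    rw [map_add]
    exact (map_add g₁ _ _).trans ((congrArg₂ (· + ·) hx hy).trans (map_add g₂ _ _).symm)

end RelFrob

section Lift

variable [ExpChar R p] [ExpChar A p] {B : Type*} [CommRing B] [Algebra R B] [ExpChar B p]

noncomputable def frobeniusRootHom (hbij : Function.Bijective (relFrob p R A))
    (ψ : A →ₐ[R] FStar p B) : A →ₐ[R] B where
  toRingHom := ((Algebra.TensorProduct.productMap ψ (fstarAlgHom p R B)).comp
      (AlgEquiv.ofBijective (relFrob p R A) hbij).symm.toAlgHom : FStar p A →+* FStar p B)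
  commutes' r := by
    show Algebra.TensorProduct.productMap ψ (fstarAlgHom p R B)
      ((AlgEquiv.ofBijective (relFrob p R A) hbij).symm (algebraMap R A r)) = algebraMap R B r
    rw [← relFrob_one_tmul, AlgEquiv.ofBijective_symm_apply_apply]
    exact Algebra.TensorProduct.productMap_right_apply _ _ _

theorem frobeniusRootHom_relFrob (hbij : Function.Bijective (relFrob p R A))
    (ψ : A →ₐ[R] FStar p B) (x : A ⊗[R] FStar p R) :
    frobeniusRootHom hbij ψ (relFrob p R A x) =
      Algebra.TensorProduct.productMap ψ (fstarAlgHom p R B) x :=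
  congrArg _ (AlgEquiv.ofBijective_symm_apply_apply _ hbij x)

theorem frobeniusRootHom_pow (hbij : Function.Bijective (relFrob p R A))
    (ψ : A →ₐ[R] FStar p B) (a : A) : frobeniusRootHom hbij ψ (a ^ p) = ψ a := by
  rw [← relFrob_tmul_one (R := R), frobeniusRootHom_relFrob]
  exact Algebra.TensorProduct.productMap_left_apply ψ (fstarAlgHom p R B) a

end Lift

section SquareZeroLift

variable [Fact p.Prime] [ExpChar R p] [ExpChar A p] {B : Type*} [CommRing B] [Algebra R B]
  [ExpChar B p] {I : Ideal B}

theorem comp_mkₐ_injective_of_relFrob_surjective (hsurj : Function.Surjective (relFrob p R A))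
    (hI : I ^ 2 = ⊥) :
    Function.Injective ((Ideal.Quotient.mkₐ R I).comp : (A →ₐ[R] B) → A →ₐ[R] B ⧸ I) := by
  intro g₁ g₂ h
  refine AlgHom.ext_of_relFrob_surjective hsurj fun a ↦ ?_
  have hpow (g : A →ₐ[R] B) :
      g (a ^ p) = quotientFrobenius p R hI ((Ideal.Quotient.mkₐ R I).comp g a) := by
    rw [map_pow]
    exact (quotientFrobenius_mk hI (g a)).symm
  rw [hpow g₁, hpow g₂, h]

theorem comp_mkₐ_surjective_of_relFrob_bijective (hbij : Function.Bijective (relFrob p R A))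
    (hI : I ^ 2 = ⊥) :
    Function.Surjective ((Ideal.Quotient.mkₐ R I).comp : (A →ₐ[R] B) → A →ₐ[R] B ⧸ I) := by
  intro φ
  refine ⟨frobeniusRootHom hbij ((quotientFrobenius p R hI).comp φ),
    AlgHom.ext_of_relFrob_surjective hbij.2 fun a ↦ ?_⟩
  rw [AlgHom.comp_apply, frobeniusRootHom_pow, map_pow]
  exact mk_quotientFrobenius hI (φ a)

end SquareZeroLift

theorem comp_mkₐ_bijective_of_subsingleton {B : Type*} [CommRing B] [Algebra R B] [Subsingleton B]
    (I : Ideal B) :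
    Function.Bijective ((Ideal.Quotient.mkₐ R I).comp : (A →ₐ[R] B) → A →ₐ[R] B ⧸ I) := by
  let e : B ≃ₐ[R] B ⧸ I := AlgEquiv.ofBijective (Ideal.Quotient.mkₐ R I)
    ⟨fun _ _ _ ↦ Subsingleton.elim _ _, Ideal.Quotient.mkₐ_surjective R I⟩
  exact ⟨fun _ _ _ ↦ AlgHom.ext fun _ ↦ Subsingleton.elim _ _,
    fun φ ↦ ⟨e.symm.toAlgHom.comp φ, AlgHom.ext fun a ↦ e.apply_symm_apply (φ a)⟩⟩

theorem stmt_18.{u} (p : ℕ) [Fact p.Prime] (R A : Type u) [CommRing R] [CommRing A] [Algebra R A]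
    [CharP R p] [CharP A p]
    (hflat : Module.Flat R A)
    (hbij : Function.Bijective (relFrob p R A)) :
    Algebra.FormallyEtale R A := by
  rw [Algebra.FormallyEtale.iff_comp_bijective]
  intro B _ _ I hI
  rcases subsingleton_or_nontrivial B with _ | _
  · exact comp_mkₐ_bijective_of_subsingleton I
  · have : CharP B p := charP_of_nontrivial_algebra (R := R) B
    exact ⟨comp_mkₐ_injective_of_relFrob_surjective hbij.2 hI,
      comp_mkₐ_surjective_of_relFrob_bijective hbij hI⟩
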